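/- arXiv:1102.3540 — 5 statements merged into one kernel-verified Lean document; each statement's English description precedes it below -/
import Mathlib

section
/- For 0 < p < q ≤ ∞ and any positive integer n < m, the thresholding operator P_n on ℓ_p^m defined by P_n(x) = ∑_{j=1}^n (x_{k_j} − |x_{k_{n+1}}| · sign(x_{k_j})) e_{k_j}, where the indices k_1,…,k_m order the coordinates so that |x_{k_1}| ≥ |x_{k_2}| ≥ … ≥ |x_{k_m}|, satisfies sup_{x ∈ B_p^m} ‖x − P_n(x)‖_{ℓ_q^m} ≤ n^{1/q − 1/p}. -/
/-!
Let `t` be the `(n+1)`-st largest modulus of `x`. Every coordinate of the residual `x - P_n x`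
is bounded by both `t` and `|x_i|`. Since the `n` largest coordinates all exceed `t`, we have
`n t^p ≤ ‖x‖_p^p ≤ 1`, i.e. `t ≤ n^{-1/p}`. Interpolating, `|r_i|^q ≤ t^{q-p} |x_i|^p`, so
`‖r‖_q^q ≤ t^{q-p} ≤ n^{-(q-p)/p}`; for `q = ∞` simply `‖r‖_∞ ≤ t ≤ n^{-1/p}`.
-/

open MeasureTheory ENNReal

/-- The `ℓ_q^m` quasi-norm on `ℝ^m`, realized as the `L_q` norm with respect to
counting measure (so `q = ∞` gives the max norm). -/
noncomputable def lqNorm {m : ℕ} (q : ℝ≥0∞) (x : Fin m → ℝ) : ℝ≥0∞ :=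
  eLpNorm x q Measure.count

open Finset

lemma Real.abs_mul_sign_le {t : ℝ} (ht : 0 ≤ t) (a : ℝ) : |t * Real.sign a| ≤ t := by
  rcases Real.sign_apply_eq a with h | h | h <;> simp [h, abs_of_nonneg ht, ht]

lemma enorm_sub_ite_sub_abs_mul_sign_le_min {a b : ℝ} {P : Prop} [Decidable P]
    (hP : P → |b| ≤ |a|) (hnP : ¬P → |a| ≤ |b|) :
    ‖a - if P then a - |b| * Real.sign a else 0‖ₑ ≤ min ‖b‖ₑ ‖a‖ₑ := by
  simp only [Real.enorm_eq_ofReal_abs, ← ofReal_min]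
  refine ofReal_le_ofReal ?_
  split_ifs with h
  · rw [sub_sub_self]
    exact le_min (Real.abs_mul_sign_le (abs_nonneg b) a)
      ((Real.abs_mul_sign_le (abs_nonneg b) a).trans (hP h))
  · rw [sub_zero]
    exact le_min (hnP h) le_rfl

lemma ENNReal.rpow_neg_inv_rpow_sub_rpow_inv (x : ℝ≥0∞) {p q : ℝ} (hp : p ≠ 0) (hq : q ≠ 0) :
    ((x ^ (-p⁻¹)) ^ (q - p)) ^ (1 / q) = x ^ (1 / q - 1 / p) := by
  rw [← rpow_mul, ← rpow_mul]
  congr 1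
  field_simp
  ring

lemma ENNReal.rpow_le_rpow_sub_mul_rpow_of_le_min {a b T : ℝ≥0∞} {p q : ℝ} (hp : 0 ≤ p)
    (hpq : p ≤ q) (ha : a ≤ min T b) : a ^ q ≤ T ^ (q - p) * b ^ p := by
  calc a ^ q = a ^ (q - p) * a ^ p := by
        rw [← rpow_add_of_nonneg _ _ (sub_nonneg.mpr hpq) hp, sub_add_cancel]
    _ ≤ T ^ (q - p) * b ^ p :=
        mul_le_mul' (rpow_le_rpow (ha.trans (min_le_left _ _)) (sub_nonneg.mpr hpq))
          (rpow_le_rpow (ha.trans (min_le_right _ _)) hp)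

namespace MeasureTheory

variable {ι ε : Type*} [MeasurableSpace ι] [MeasurableSingletonClass ι] [ENorm ε]
  {p q : ℝ≥0∞} {f g : ι → ε}

lemma eLpNorm_count_top_le {T : ℝ≥0∞} (hg : ∀ i, ‖g i‖ₑ ≤ T) : eLpNorm g ∞ .count ≤ T := by
  rw [eLpNorm_exponent_top, eLpNormEssSup_count]
  exact iSup_le hg

variable [Fintype ι]

lemma eLpNorm_count_eq_sum (hp0 : p ≠ 0) (hp : p ≠ ∞) :
    eLpNorm f p .count = (∑ i, ‖f i‖ₑ ^ p.toReal) ^ (1 / p.toReal) := by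
  rw [eLpNorm_eq_lintegral_rpow_enorm_toReal hp0 hp, lintegral_count, tsum_fintype]

lemma sum_enorm_rpow_le_one_of_eLpNorm_count_le_one (hp0 : p ≠ 0) (hp : p ≠ ∞)
    (hf : eLpNorm f p .count ≤ 1) : ∑ i, ‖f i‖ₑ ^ p.toReal ≤ 1 := by
  have hpr : 0 < p.toReal := toReal_pos hp0 hp
  rw [eLpNorm_count_eq_sum hp0 hp, one_div, ← le_rpow_inv_iff (inv_pos.mpr hpr), inv_inv,
    one_rpow] at hf
  exact hf

lemma le_card_rpow_neg_inv_of_le_enorm (hp0 : p ≠ 0) (hp : p ≠ ∞) (hf : eLpNorm f p .count ≤ 1)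
    (s : Finset ι) {T : ℝ≥0∞} (hs : ∀ i ∈ s, T ≤ ‖f i‖ₑ) :
    T ≤ (#s : ℝ≥0∞) ^ (-p.toReal⁻¹) := by
  have hpr : 0 < p.toReal := toReal_pos hp0 hp
  have hmass : #s * T ^ p.toReal ≤ 1 :=
    calc #s * T ^ p.toReal = #s • T ^ p.toReal := (nsmul_eq_mul _ _).symm
      _ ≤ ∑ i ∈ s, ‖f i‖ₑ ^ p.toReal :=
          card_nsmul_le_sum _ _ _ fun i hi => rpow_le_rpow (hs i hi) hpr.le
      _ ≤ ∑ i, ‖f i‖ₑ ^ p.toReal := sum_le_sum_of_subset (subset_univ s)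
      _ ≤ 1 := sum_enorm_rpow_le_one_of_eLpNorm_count_le_one hp0 hp hf
  rw [rpow_neg, ← inv_rpow, le_rpow_inv_iff hpr, le_inv_iff_mul_le, mul_comm]
  exact hmass

/-- Indices count from `0`: the coordinate `f (σ k)` is preceded by `k` coordinates at least
as large. -/
lemma enorm_apply_le_rpow_of_antitone (hp0 : p ≠ 0) (hp : p ≠ ∞) (hf : eLpNorm f p .count ≤ 1)
    {m : ℕ} (σ : Fin m ≃ ι) (hσ : Antitone fun j => ‖f (σ j)‖ₑ) (k : Fin m) :
    ‖f (σ k)‖ₑ ≤ (k : ℝ≥0∞) ^ (-p.toReal⁻¹) := by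
  simpa using le_card_rpow_neg_inv_of_le_enorm hp0 hp hf ((Iio k).map σ.toEmbedding) fun i hi => by
    obtain ⟨j, hj, rfl⟩ := mem_map.mp hi
    exact hσ (mem_Iio.mp hj).le

lemma eLpNorm_count_le_rpow_of_le_min (hp : 0 < p) (hpq : p < q) (hq : q ≠ ∞)
    (hf : eLpNorm f p .count ≤ 1) {T : ℝ≥0∞} (hg : ∀ i, ‖g i‖ₑ ≤ min T ‖f i‖ₑ) :
    eLpNorm g q .count ≤ (T ^ (q.toReal - p.toReal)) ^ (1 / q.toReal) := by
  have hp_top : p ≠ ∞ := (hpq.trans_le le_top).ne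
  have hpq' : p.toReal ≤ q.toReal := toReal_mono hq hpq.le
  rw [eLpNorm_count_eq_sum (hp.trans hpq).ne' hq]
  refine rpow_le_rpow ?_ (by positivity)
  calc ∑ i, ‖g i‖ₑ ^ q.toReal ≤ ∑ i, T ^ (q.toReal - p.toReal) * ‖f i‖ₑ ^ p.toReal :=
        sum_le_sum fun i _ => rpow_le_rpow_sub_mul_rpow_of_le_min toReal_nonneg hpq' (hg i)
    _ = T ^ (q.toReal - p.toReal) * ∑ i, ‖f i‖ₑ ^ p.toReal := (mul_sum _ _ _).symm
    _ ≤ T ^ (q.toReal - p.toReal) := mul_le_of_le_one_right' <|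
        sum_enorm_rpow_le_one_of_eLpNorm_count_le_one hp.ne' hp_top hf

end MeasureTheory

theorem soft_threshold_error_bound_general {m n : ℕ} (hnm : n < m)
    (p q : ℝ≥0∞) (hp : 0 < p) (hpq : p < q)
    (x : Fin m → ℝ) (hx : lqNorm p x ≤ 1)
    (σ : Equiv.Perm (Fin m)) (hσ : Antitone fun j => |x (σ j)|) :
    lqNorm q
      (x - fun i =>
        if ((σ.symm i : ℕ)) < n then x i - |x (σ ⟨n, hnm⟩)| * Real.sign (x i) else 0)
      ≤ (n : ℝ≥0∞) ^ (1 / q.toReal - 1 / p.toReal) := by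
  have hp_top : p ≠ ∞ := (hpq.trans_le le_top).ne
  have hσ' : Antitone fun j => ‖x (σ j)‖ₑ := by
    simpa [Function.comp_def, Real.enorm_eq_ofReal_abs] using ofReal_mono.comp_antitone hσ
  have hT : ‖x (σ ⟨n, hnm⟩)‖ₑ ≤ (n : ℝ≥0∞) ^ (-p.toReal⁻¹) :=
    enorm_apply_le_rpow_of_antitone hp.ne' hp_top hx σ hσ' ⟨n, hnm⟩
  have hresidual : ∀ i, ‖(x - fun i => if ((σ.symm i : ℕ)) < n then
      x i - |x (σ ⟨n, hnm⟩)| * Real.sign (x i) else 0) i‖ₑ ≤ min ‖x (σ ⟨n, hnm⟩)‖ₑ ‖x i‖ₑ :=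
    fun i => enorm_sub_ite_sub_abs_mul_sign_le_min
      (fun hi => by simpa using hσ (a := σ.symm i) (b := ⟨n, hnm⟩) hi.le)
      (fun hi => by simpa using hσ (a := ⟨n, hnm⟩) (b := σ.symm i) (not_lt.mp hi))
  rcases eq_or_ne q ∞ with rfl | hq
  · -- `∞.toReal = 0` and `1 / 0 = 0`, so the exponent is `-1/p` as it should be.
    rw [toReal_top, one_div, one_div, _root_.inv_zero, zero_sub]
    exact (eLpNorm_count_top_le fun i => (hresidual i).trans (min_le_left _ _)).trans hT
  · have hpqr : p.toReal ≤ q.toReal := toReal_mono hq hpq.le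
    calc lqNorm q _ ≤ (‖x (σ ⟨n, hnm⟩)‖ₑ ^ (q.toReal - p.toReal)) ^ (1 / q.toReal) :=
          eLpNorm_count_le_rpow_of_le_min hp hpq hq hx hresidual
      _ ≤ (((n : ℝ≥0∞) ^ (-p.toReal⁻¹)) ^ (q.toReal - p.toReal)) ^ (1 / q.toReal) :=
          rpow_le_rpow (rpow_le_rpow hT (sub_nonneg.mpr hpqr)) (by positivity)
      _ = (n : ℝ≥0∞) ^ (1 / q.toReal - 1 / p.toReal) :=
          rpow_neg_inv_rpow_sub_rpow_inv _ (toReal_pos hp.ne' hp_top).ne'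
            (toReal_pos (hp.trans hpq).ne' hq).ne'

/-- Soft thresholding `P_n` keeping the `n` largest coordinates (given by an ordering
permutation `σ`) soft-thresholded at the `(n+1)`-st largest absolute value satisfies
`‖x - P_n x‖_{ℓ_q^m} ≤ n^{1/q - 1/p}` on the unit ball of `ℓ_p^m`, for `0 < p < q ≤ ∞`. -/
theorem soft_threshold_error_bound {m n : ℕ} (hn : 0 < n) (hnm : n < m)
    (p q : ℝ≥0∞) (hp : 0 < p) (hpq : p < q)
    (x : Fin m → ℝ) (hx : lqNorm p x ≤ 1)
    (σ : Equiv.Perm (Fin m)) (hσ : Antitone fun j => |x (σ j)|) :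
    lqNorm q
      (x - fun i =>
        if ((σ.symm i : ℕ)) < n then x i - |x (σ ⟨n, hnm⟩)| * Real.sign (x i) else 0)
      ≤ (n : ℝ≥0∞) ^ (1 / q.toReal - 1 / p.toReal) :=
  soft_threshold_error_bound_general hnm p q hp hpq x hx σ hσ
end

section
/- For 0 < p, q ≤ ∞ and any positive integer n < m, the soft-thresholding operator P_n is a continuous map from ℓ_p^m to ℓ_q^m. -/
open Classical ENNReal

/-- The `(n+1)`-st largest absolute value of the coordinates of `x`: the least
nonnegative threshold `t` such that at most `n` coordinates exceed `t` in absolute value. -/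
noncomputable def thresh {m : ℕ} (n : ℕ) (x : Fin m → ℝ) : ℝ :=
  sInf {t : ℝ | 0 ≤ t ∧ (Finset.univ.filter fun i => t < |x i|).card ≤ n}

/-- The soft-thresholding `n`-term operator `P_n` on `ℝ^m`: each coordinate is
soft-thresholded at the `(n+1)`-st largest absolute value, which keeps (at most)
the `n` largest coordinates. -/
noncomputable def softThr {m : ℕ} (n : ℕ) (x : Fin m → ℝ) : Fin m → ℝ :=
  fun i => Real.sign (x i) * max (|x i| - thresh n x) 0

/-! The threshold `thresh n x` is the min-max `min_{#T ≤ n} max_{i ∉ T} |x i|` (the maximum of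
the empty family being `0`), a continuous function of `x`. For `t ≥ 0`, soft thresholding
`y ↦ sign y * max (|y| - t) 0` equals `max (y - t) 0 + min (y + t) 0`, which is jointly continuous
in `(y, t)`. -/

open Finset NNReal

section InfSupAbs

variable {ι : Type*} [Fintype ι]

noncomputable def infSupAbs (n : ℕ) (x : ι → ℝ) : ℝ≥0 :=
  (univ.filter fun T : Finset ι => #T ≤ n).inf' ⟨∅, by simp⟩ fun T => Tᶜ.sup fun i => ‖x i‖₊

theorem infSupAbs_le_iff {n : ℕ} {x : ι → ℝ} {t : ℝ≥0} :
    infSupAbs n x ≤ t ↔ #{i | t < ‖x i‖₊} ≤ n := by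
  constructor
  · intro ht
    obtain ⟨T, hT, hTx⟩ : ∃ T ∈ univ.filter fun T : Finset ι => #T ≤ n,
        infSupAbs n x = Tᶜ.sup fun i => ‖x i‖₊ :=
      exists_mem_eq_inf' _ _
    refine (card_le_card fun i hi => ?_).trans (mem_filter.1 hT).2
    by_contra hiT
    have : ‖x i‖₊ ≤ t := (le_sup (f := fun i => ‖x i‖₊) (mem_compl.2 hiT)).trans (hTx ▸ ht)
    exact (mem_filter.1 hi).2.not_ge this
  · intro hcard
    refine (inf'_le _ (by simpa using hcard)).trans (Finset.sup_le fun i hi => ?_)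
    simpa using hi

theorem continuous_infSupAbs (n : ℕ) : Continuous (infSupAbs n : (ι → ℝ) → ℝ≥0) :=
  Continuous.finset_inf'_apply _ fun _ _ =>
    Continuous.finset_sup_apply fun i _ => (continuous_apply i).nnnorm

end InfSupAbs

theorem thresh_eq_infSupAbs {m : ℕ} (n : ℕ) (x : Fin m → ℝ) : thresh n x = infSupAbs n x := by
  suffices {t : ℝ | 0 ≤ t ∧ #{i | t < |x i|} ≤ n} = Set.Ici (infSupAbs n x : ℝ) by
    rw [thresh, this, csInf_Ici]
  ext t
  refine ⟨fun ⟨ht, hcard⟩ => ?_, fun ht => ?_⟩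
  · lift t to ℝ≥0 using ht
    exact NNReal.coe_le_coe.2 (infSupAbs_le_iff.2 (by simpa [← NNReal.coe_lt_coe] using hcard))
  · lift t to ℝ≥0 using (infSupAbs n x).2.trans ht
    simpa [← NNReal.coe_lt_coe] using infSupAbs_le_iff.1 (NNReal.coe_le_coe.1 ht)

theorem continuous_thresh {m : ℕ} (n : ℕ) : Continuous (thresh n : (Fin m → ℝ) → ℝ) := by
  simp_rw [funext (thresh_eq_infSupAbs n)]
  exact continuous_coe.comp (continuous_infSupAbs n)

theorem sign_mul_max_abs_sub (y : ℝ) {t : ℝ} (ht : 0 ≤ t) :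
    Real.sign y * max (|y| - t) 0 = max (y - t) 0 + min (y + t) 0 := by
  rcases lt_trichotomy y 0 with hy | rfl | hy
  · rw [Real.sign_of_neg hy, abs_of_neg hy]
    grind
  · simp [ht]
  · rw [Real.sign_of_pos hy, abs_of_pos hy]
    grind

theorem softThr_continuous_general {m n : ℕ} :
    Continuous (softThr n : (Fin m → ℝ) → (Fin m → ℝ)) := by
  have hsoft : softThr n = fun (x : Fin m → ℝ) i =>
      max (x i - thresh n x) 0 + min (x i + thresh n x) 0 := by
    ext x i
    rw [softThr, sign_mul_max_abs_sub _ (by simp [thresh_eq_infSupAbs])]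
  rw [hsoft]
  exact continuous_pi fun i =>
    (((continuous_apply i).sub (continuous_thresh n)).max continuous_const).add
      (((continuous_apply i).add (continuous_thresh n)).min continuous_const)

/-- For `0 < p, q ≤ ∞` and `n < m`, the soft-thresholding operator `P_n` is a continuous
map from `ℓ_p^m` to `ℓ_q^m` (all these quasi-norms induce the product topology on `ℝ^m`). -/
theorem softThr_continuous {m n : ℕ} (hn : 0 < n) (hnm : n < m)
    (p q : ℝ≥0∞) (hp : 0 < p) (hq : 0 < q) :
    Continuous (softThr n : (Fin m → ℝ) → (Fin m → ℝ)) :=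
  softThr_continuous_general
end

section
/- If a linear space L carries two equivalent quasi-norms ‖·‖_X and ‖·‖_Y, W ⊂ L, and τ_n^X(W,Y) > 0, then for all nonnegative integers n, m one has τ_{n+m}^X(W,X) ≤ τ_n^X(W,Y) · τ_m^X(S_Y, X), where S_Y denotes the unit ball of (L, ‖·‖_Y). -/
/-! Given an `n`-term scheme `S₁` for `W` with `NY`-error `e₁ > 0` and an `m`-term scheme `S₂`
for the unit ball of `NY` with `NX`-error `e₂`, the map `f ↦ S₁ f + e₁ • S₂ (e₁⁻¹ • (f - S₁ f))`
is an `(n + m)`-term scheme for `W` with `NX`-error `e₁ * e₂`, built on the family `Φ₁ ∪ e₁ • Φ₂`.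
Equivalence of the quasi-norms makes it continuous into `NX` and keeps the family bounded;
`0 < τ_n^X(W, Y)` guarantees `e₁ > 0`. Taking infima over both schemes gives the inequality. -/

/-- A quasi-norm on a real vector space `E`. -/
structure QuasiNorm (E : Type*) [AddCommGroup E] [Module ℝ E] where
  toFun : E → ℝ
  nonneg : ∀ x, 0 ≤ toFun x
  eq_zero_iff : ∀ x, toFun x = 0 ↔ x = 0
  smul_eq : ∀ (a : ℝ) (x : E), toFun (a • x) = |a| * toFun x
  K : ℝ
  one_le_K : 1 ≤ K
  triangle : ∀ x y, toFun (x + y) ≤ K * (toFun x + toFun y)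

/-- `Σ_n(Φ)`: linear combinations of at most `n` elements of the family `Φ`. -/
def SigmaN {E : Type*} [AddCommGroup E] [Module ℝ E] (n : ℕ) (Φ : Set E) : Set E :=
  {y | ∃ (c : Fin n → ℝ) (φ : Fin n → E), (∀ j, φ j ∈ Φ) ∧ y = ∑ j, c j • φ j}

/-- Continuity of a map with respect to a quasi-norm on its domain and another
quasi-norm on its codomain (ε-δ form). -/
def QCont {E : Type*} [AddCommGroup E] [Module ℝ E]
    (NX NY : QuasiNorm E) (S : E → E) : Prop :=
  ∀ x : E, ∀ ε > (0 : ℝ), ∃ δ > (0 : ℝ), ∀ y : E,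
    NX.toFun (y - x) < δ → NY.toFun (S y - S x) < ε

/-- The continuous nonlinear width `τ_n^X(W, Y)`: infimum over families `Φ` bounded
in `Y` whose intersection with every finite-dimensional subspace is finite, and over
maps `S` continuous from `(E, N_X)` to `(E, N_Y)` with range in `Σ_n(Φ)`, of the
worst-case `N_Y`-error on `W`. -/
noncomputable def tauQN {E : Type*} [AddCommGroup E] [Module ℝ E]
    (NX NY : QuasiNorm E) (n : ℕ) (W : Set E) : ℝ :=
  sInf {e : ℝ | ∃ Φ : Set E, (∃ R : ℝ, ∀ y ∈ Φ, NY.toFun y ≤ R) ∧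
    (∀ L : Subspace ℝ E, FiniteDimensional ℝ L → (Φ ∩ (L : Set E)).Finite) ∧
    ∃ S : E → E, QCont NX NY S ∧ Set.range S ⊆ SigmaN n Φ ∧
      ∀ f ∈ W, NY.toFun (f - S f) ≤ e}

open Pointwise

section

variable {E : Type*} [AddCommGroup E] [Module ℝ E]

namespace QuasiNorm

lemma map_zero (N : QuasiNorm E) : N.toFun 0 = 0 := (N.eq_zero_iff 0).mpr rfl

lemma K_pos (N : QuasiNorm E) : 0 < N.K := one_pos.trans_le N.one_le_K

lemma smul_eq_of_nonneg (N : QuasiNorm E) {a : ℝ} (ha : 0 ≤ a) (x : E) :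
    N.toFun (a • x) = a * N.toFun x := by
  rw [N.smul_eq, abs_of_nonneg ha]

end QuasiNorm

namespace QCont

variable {NX NY NZ : QuasiNorm E} {S T : E → E}

lemma const (NX NY : QuasiNorm E) (v : E) : QCont NX NY fun _ => v :=
  fun _ _ hε => ⟨1, one_pos, fun _ _ => by simpa [NY.map_zero] using hε⟩

lemma id (NX : QuasiNorm E) : QCont NX NX fun x => x :=
  fun _ ε hε => ⟨ε, hε, fun _ hy => hy⟩

lemma comp (hS : QCont NX NY S) (hT : QCont NY NZ T) : QCont NX NZ fun x => T (S x) := by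
  intro x ε hε
  obtain ⟨δ₁, hδ₁, hT⟩ := hT (S x) ε hε
  obtain ⟨δ, hδ, hS⟩ := hS x δ₁ hδ₁
  exact ⟨δ, hδ, fun y hy => hT (S y) (hS y hy)⟩

lemma mono_right (hS : QCont NX NY S) {C : ℝ} (hC : 0 < C)
    (hle : ∀ u, NZ.toFun u ≤ C * NY.toFun u) : QCont NX NZ S := by
  intro x ε hε
  obtain ⟨δ, hδ, hS⟩ := hS x (ε / C) (by positivity)
  refine ⟨δ, hδ, fun y hy => ?_⟩
  calc NZ.toFun (S y - S x) ≤ C * NY.toFun (S y - S x) := hle _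
    _ < C * (ε / C) := mul_lt_mul_of_pos_left (hS y hy) hC
    _ = ε := by field_simp

lemma smul (hS : QCont NX NY S) (a : ℝ) : QCont NX NY fun x => a • S x := by
  intro x ε hε
  obtain ⟨δ, hδ, hS⟩ := hS x (ε / (|a| + 1)) (by positivity)
  refine ⟨δ, hδ, fun y hy => ?_⟩
  rw [← smul_sub, NY.smul_eq]
  calc |a| * NY.toFun (S y - S x) ≤ (|a| + 1) * NY.toFun (S y - S x) := by
        gcongr; · exact NY.nonneg _
        linarith
    _ < (|a| + 1) * (ε / (|a| + 1)) := mul_lt_mul_of_pos_left (hS y hy) (by positivity)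
    _ = ε := by field_simp

lemma add (hS : QCont NX NY S) (hT : QCont NX NY T) : QCont NX NY fun x => S x + T x := by
  intro x ε hε
  have hK := NY.K_pos
  obtain ⟨δ₁, hδ₁, hS⟩ := hS x (ε / (2 * NY.K)) (by positivity)
  obtain ⟨δ₂, hδ₂, hT⟩ := hT x (ε / (2 * NY.K)) (by positivity)
  refine ⟨min δ₁ δ₂, lt_min hδ₁ hδ₂, fun y hy => ?_⟩
  have hSy := hS y (hy.trans_le (min_le_left _ _))
  have hTy := hT y (hy.trans_le (min_le_right _ _))
  rw [add_sub_add_comm]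
  calc NY.toFun _ ≤ NY.K * (NY.toFun (S y - S x) + NY.toFun (T y - T x)) := NY.triangle _ _
    _ < NY.K * (ε / (2 * NY.K) + ε / (2 * NY.K)) := by gcongr
    _ = ε := by field_simp; ring

lemma sub (hS : QCont NX NY S) (hT : QCont NX NY T) : QCont NX NY fun x => S x - T x := by
  simpa only [neg_one_smul, ← sub_eq_add_neg] using hS.add (hT.smul (-1))

end QCont

lemma zero_mem_sigmaN (n : ℕ) {Φ : Set E} (hΦ : Φ.Nonempty) : (0 : E) ∈ SigmaN n Φ :=
  ⟨fun _ => 0, fun _ => hΦ.some, fun _ => hΦ.some_mem, by simp⟩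

lemma add_smul_mem_sigmaN {n m : ℕ} {Φ₁ Φ₂ : Set E} {y z : E} (a : ℝ)
    (hy : y ∈ SigmaN n Φ₁) (hz : z ∈ SigmaN m Φ₂) : y + a • z ∈ SigmaN (n + m) (Φ₁ ∪ a • Φ₂) := by
  obtain ⟨c, φ, hφ, rfl⟩ := hy
  obtain ⟨d, ψ, hψ, rfl⟩ := hz
  refine ⟨Fin.append c d, Fin.append φ fun k => a • ψ k, fun j => ?_, ?_⟩
  · refine Fin.addCases (fun i => ?_) (fun i => ?_) j
    · simpa only [Fin.append_left] using Set.mem_union_left _ (hφ i)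
    · simpa only [Fin.append_right] using Set.mem_union_right _ (Set.smul_mem_smul_set (hψ i))
  · simp only [Fin.sum_univ_add, Fin.append_left, Fin.append_right, Finset.smul_sum, smul_smul,
      mul_comm a]

lemma Set.Finite.smul_inter_submodule {Φ : Set E} {L : Submodule ℝ E}
    (hΦ : (Φ ∩ L).Finite) {a : ℝ} (ha : a ≠ 0) : (a • Φ ∩ L).Finite := by
  refine (hΦ.smul_set (a := a)).subset ?_
  rintro _ ⟨⟨w, hw, rfl⟩, hwL⟩
  refine Set.smul_mem_smul_set ⟨hw, ?_⟩
  simpa [smul_smul, ha] using L.smul_mem a⁻¹ hwL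

lemma Real.sInf_le_sInf_mul_sInf {A A₁ A₂ : Set ℝ} (hA : BddBelow A) (h₁ : A₁.Nonempty)
    (h₂ : A₂.Nonempty) (h₁_nonneg : ∀ a ∈ A₁, 0 ≤ a) (h₂_nonneg : ∀ b ∈ A₂, 0 ≤ b)
    (hmul : ∀ a ∈ A₁, ∀ b ∈ A₂, a * b ∈ A) : sInf A ≤ sInf A₁ * sInf A₂ := by
  have h_left : ∀ a ∈ A₁, sInf A ≤ sInf A₂ • a := fun a ha => by
    rw [smul_eq_mul, mul_comm, ← smul_eq_mul, ← Real.sInf_smul_of_nonneg (h₁_nonneg a ha)]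
    refine csInf_le_csInf hA (h₂.smul_set) ?_
    rintro _ ⟨b, hb, rfl⟩
    exact hmul a ha b hb
  rw [mul_comm, ← smul_eq_mul, ← Real.sInf_smul_of_nonneg (Real.sInf_nonneg h₂_nonneg)]
  refine le_csInf h₁.smul_set ?_
  rintro _ ⟨a, ha, rfl⟩
  exact h_left a ha

def tauErrors (NX NY : QuasiNorm E) (n : ℕ) (W : Set E) : Set ℝ :=
  {e : ℝ | ∃ Φ : Set E, (∃ R : ℝ, ∀ y ∈ Φ, NY.toFun y ≤ R) ∧
    (∀ L : Subspace ℝ E, FiniteDimensional ℝ L → (Φ ∩ (L : Set E)).Finite) ∧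
    ∃ S : E → E, QCont NX NY S ∧ Set.range S ⊆ SigmaN n Φ ∧
      ∀ f ∈ W, NY.toFun (f - S f) ≤ e}

section tauErrors

variable {NX NY : QuasiNorm E} {n : ℕ} {W : Set E}

lemma tauQN_eq_sInf_tauErrors : tauQN NX NY n W = sInf (tauErrors NX NY n W) := rfl

lemma mem_tauErrors_of_bound {r : ℝ} (hW : ∀ f ∈ W, NY.toFun f ≤ r) :
    r ∈ tauErrors NX NY n W := by
  refine ⟨{0}, ⟨0, fun y hy => by rw [hy, NY.map_zero]⟩,
    fun L _ => (Set.finite_singleton 0).subset Set.inter_subset_left,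
    fun _ => 0, QCont.const NX NY 0, ?_, fun f hf => by simpa using hW f hf⟩
  rintro _ ⟨f, rfl⟩
  exact zero_mem_sigmaN n (Set.singleton_nonempty 0)

lemma tauQN_empty : tauQN NX NY n ∅ = 0 := by
  rw [tauQN_eq_sInf_tauErrors, Set.eq_univ_of_forall fun r => mem_tauErrors_of_bound (by simp),
    Real.sInf_univ]

lemma nonneg_of_mem_tauErrors (hW : W.Nonempty) {e : ℝ} (he : e ∈ tauErrors NX NY n W) :
    0 ≤ e := by
  obtain ⟨-, -, -, S, -, -, herr⟩ := he
  exact (NY.nonneg _).trans (herr _ hW.some_mem)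

lemma tauErrors_nonempty_of_tauQN_pos (hpos : 0 < tauQN NX NY n W) :
    (tauErrors NX NY n W).Nonempty :=
  Set.nonempty_iff_ne_empty.2 fun h => by simp [tauQN_eq_sInf_tauErrors, h] at hpos

lemma nonempty_of_tauQN_pos (hpos : 0 < tauQN NX NY n W) : W.Nonempty :=
  Set.nonempty_iff_ne_empty.2 fun h => by simp [h, tauQN_empty] at hpos

lemma pos_of_mem_tauErrors (hpos : 0 < tauQN NX NY n W) {e : ℝ}
    (he : e ∈ tauErrors NX NY n W) : 0 < e :=
  hpos.trans_le <| csInf_le ⟨0, fun _ => nonneg_of_mem_tauErrors (nonempty_of_tauQN_pos hpos)⟩ he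

theorem mul_mem_tauErrors_add {k : ℝ} (hk : 0 < k) (hXY : ∀ u, NX.toFun u ≤ k * NY.toFun u)
    {m : ℕ} {e₁ e₂ : ℝ} (he₁ : 0 < e₁) (h₁ : e₁ ∈ tauErrors NX NY n W)
    (h₂ : e₂ ∈ tauErrors NX NX m {x | NY.toFun x ≤ 1}) :
    e₁ * e₂ ∈ tauErrors NX NX (n + m) W := by
  obtain ⟨Φ₁, ⟨R₁, hR₁⟩, hfin₁, S₁, hS₁, hS₁Φ, hS₁W⟩ := h₁
  obtain ⟨Φ₂, ⟨R₂, hR₂⟩, hfin₂, S₂, hS₂, hS₂Φ, hS₂B⟩ := h₂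
  set g : E → E := fun f => e₁⁻¹ • (f - S₁ f)
  have hS₁X : QCont NX NX S₁ := hS₁.mono_right hk hXY
  refine ⟨Φ₁ ∪ e₁ • Φ₂, ⟨max (k * R₁) (e₁ * R₂), ?_⟩, fun L hL => ?_,
    fun f => S₁ f + e₁ • S₂ (g f), ?_, ?_, fun f hf => ?_⟩
  · rintro y (hy | ⟨w, hw, rfl⟩)
    · calc NX.toFun y ≤ k * R₁ := (hXY y).trans (by gcongr; exact hR₁ y hy)
        _ ≤ _ := le_max_left _ _
    · calc NX.toFun (e₁ • w) ≤ e₁ * R₂ := by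
            rw [NX.smul_eq_of_nonneg he₁.le]; gcongr; exact hR₂ w hw
        _ ≤ _ := le_max_right _ _
  · rw [Set.union_inter_distrib_right]
    exact (hfin₁ L hL).union ((hfin₂ L hL).smul_inter_submodule he₁.ne')
  · exact hS₁X.add ((((QCont.id NX).sub hS₁X).smul e₁⁻¹).comp hS₂ |>.smul e₁)
  · rintro _ ⟨f, rfl⟩
    exact add_smul_mem_sigmaN e₁ (hS₁Φ ⟨f, rfl⟩) (hS₂Φ ⟨g f, rfl⟩)
  · have hgf : NY.toFun (g f) ≤ 1 := by
      rw [NY.smul_eq_of_nonneg (inv_nonneg.2 he₁.le), inv_mul_le_one₀ he₁]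
      exact hS₁W f hf
    have hresidual : f - (S₁ f + e₁ • S₂ (g f)) = e₁ • (g f - S₂ (g f)) := by
      simp only [g, smul_sub, smul_smul, mul_inv_cancel₀ he₁.ne', one_smul]
      abel
    rw [hresidual, NX.smul_eq_of_nonneg he₁.le]
    gcongr
    exact hS₂B _ hgf

end tauErrors

end

/-- If a linear space carries two equivalent quasi-norms `N_X`, `N_Y`, `W ⊆ E`, and
`τ_n^X(W,Y) > 0`, then `τ_{n+m}^X(W,X) ≤ τ_n^X(W,Y) · τ_m^X(S_Y,X)`,
where `S_Y` is the unit ball of `N_Y`. -/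
theorem tau_submultiplicative {E : Type*} [AddCommGroup E] [Module ℝ E]
    (NX NY : QuasiNorm E)
    (hequiv : ∃ c C : ℝ, 0 < c ∧ 0 < C ∧
      ∀ x, c * NX.toFun x ≤ NY.toFun x ∧ NY.toFun x ≤ C * NX.toFun x)
    (W : Set E) (n m : ℕ) (hpos : 0 < tauQN NX NY n W) :
    tauQN NX NX (n + m) W ≤ tauQN NX NY n W * tauQN NX NX m {x | NY.toFun x ≤ 1} := by
  obtain ⟨c, _, hc, -, hcC⟩ := hequiv
  have hXY : ∀ u, NX.toFun u ≤ c⁻¹ * NY.toFun u := fun u => by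
    rw [inv_mul_eq_div, le_div_iff₀' hc]
    exact (hcC u).1
  have hW := nonempty_of_tauQN_pos hpos
  have hball : ({x | NY.toFun x ≤ 1} : Set E).Nonempty := ⟨0, by simp [NY.map_zero]⟩
  exact Real.sInf_le_sInf_mul_sInf ⟨0, fun _ => nonneg_of_mem_tauErrors hW⟩
    (tauErrors_nonempty_of_tauQN_pos hpos)
    ⟨c⁻¹, mem_tauErrors_of_bound fun f hf =>
      (hXY f).trans (mul_le_of_le_one_right (inv_nonneg.2 hc.le) hf)⟩
    (fun _ => nonneg_of_mem_tauErrors hW) (fun _ => nonneg_of_mem_tauErrors hball)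
    fun _ h₁ _ h₂ =>
      mul_mem_tauErrors_add (inv_pos.2 hc) hXY (pos_of_mem_tauErrors hpos h₁) h₁ h₂
end

section
/- Under the soft-thresholding map, the approximant stays ℓ_q-close continuously: for 0 < p, q ≤ ∞ and n < m, the map x ↦ x − P_n(x) from ℓ_p^m to ℓ_q^m is continuous, where P_n is the soft-thresholding n-term operator. -/
open Classical ENNReal

/-! The residual `x - P_n x` clamps every coordinate to `[-t, t]` with `t = thresh n x`, and
`thresh n` is `1`-Lipschitz for the sup distance: enlarging every `|x i|` by at most `c` can
raise the number of coordinates above a threshold `t + c` to no more than the number above `t`. -/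

section Thresh

variable {m : ℕ} (n : ℕ)

lemma thresh_set_nonempty (x : Fin m → ℝ) :
    {t : ℝ | 0 ≤ t ∧ (Finset.univ.filter fun i => t < |x i|).card ≤ n}.Nonempty := by
  refine ⟨‖x‖, norm_nonneg x, ?_⟩
  have h_empty : (Finset.univ.filter fun i => ‖x‖ < |x i|) = ∅ :=
    Finset.filter_false_of_mem fun i _ => not_lt.2 <| by
      simpa only [Real.norm_eq_abs] using norm_le_pi_norm x i
  simp [h_empty]

lemma thresh_nonneg (x : Fin m → ℝ) : 0 ≤ thresh n x :=
  le_csInf (thresh_set_nonempty n x) fun _ ht => ht.1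

lemma thresh_le_add_of_abs_le {x y : Fin m → ℝ} {c : ℝ} (hc : 0 ≤ c)
    (h : ∀ i, |y i| ≤ |x i| + c) : thresh n y ≤ thresh n x + c := by
  rw [← sub_le_iff_le_add]
  refine le_csInf (thresh_set_nonempty n x) fun t ⟨ht, hcard⟩ => sub_le_iff_le_add.2 ?_
  refine csInf_le ⟨0, fun _ hs => hs.1⟩ ⟨add_nonneg ht hc, (Finset.card_le_card ?_).trans hcard⟩
  intro i
  simp only [Finset.mem_filter, Finset.mem_univ, true_and]
  intro hi
  linarith [h i]

lemma lipschitzWith_thresh : LipschitzWith 1 (thresh (m := m) n) :=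
  LipschitzWith.of_le_add fun y x => thresh_le_add_of_abs_le n dist_nonneg fun i => by
    have hi : |y i - x i| ≤ dist y x := Real.dist_eq (y i) (x i) ▸ dist_le_pi_dist y x i
    linarith [abs_sub_abs_le_abs_sub (y i) (x i)]

end Thresh

lemma sub_sign_mul_max_abs_sub_eq_clamp (a : ℝ) {t : ℝ} (ht : 0 ≤ t) :
    a - Real.sign a * max (|a| - t) 0 = max (-t) (min a t) := by
  rcases lt_trichotomy a 0 with ha | rfl | ha
  · rw [Real.sign_of_neg ha, abs_of_neg ha]
    grind
  · simp [ht]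
  · rw [Real.sign_of_pos ha, abs_of_pos ha]
    grind

lemma sub_softThr_apply {m : ℕ} (n : ℕ) (x : Fin m → ℝ) (i : Fin m) :
    (x - softThr n x) i = max (-thresh n x) (min (x i) (thresh n x)) :=
  sub_sign_mul_max_abs_sub_eq_clamp (x i) (thresh_nonneg n x)

theorem residual_softThr_continuous_general {m n : ℕ} :
    Continuous (fun x : Fin m → ℝ => x - softThr n x) := by
  have hthresh : Continuous (thresh (m := m) n) := (lipschitzWith_thresh n).continuous
  refine continuous_pi fun i => ?_
  simp_rw [sub_softThr_apply]
  exact hthresh.neg.max ((continuous_apply i).min hthresh)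

/-- For `0 < p, q ≤ ∞` and `n < m`, the residual map `x ↦ x - P_n(x)` of soft
thresholding is continuous from `ℓ_p^m` to `ℓ_q^m` (all these quasi-norms induce the
product topology on `ℝ^m`). -/
theorem residual_softThr_continuous {m n : ℕ} (hn : 0 < n) (hnm : n < m)
    (p q : ℝ≥0∞) (hp : 0 < p) (hq : 0 < q) :
    Continuous (fun x : Fin m → ℝ => x - softThr n x) :=
  residual_softThr_continuous_general
end

section
/- If B is an n-dimensional linear space of real-valued functions on a set Ω, then the pseudo-dimension of B equals n. -/
/-- `B` pseudo-shatters `n` points: there are points `a^1, …, a^n ∈ Ω` and shifts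
`b ∈ ℝ^n` such that the functions of `B` realize all `2^n` sign patterns of
`(f(a^1) + b_1, …, f(a^n) + b_n)` (with `sgn t = 1` for `t > 0`, `-1` otherwise). -/
def PShatters {Ω : Type*} (B : Set (Ω → ℝ)) (n : ℕ) : Prop :=
  ∃ (a : Fin n → Ω) (b : Fin n → ℝ), ∀ ε : Fin n → Bool,
    ∃ f ∈ B, ∀ i : Fin n, (0 < f (a i) + b i ↔ ε i = true)

/-!
The evaluations `f ↦ f ω` span the dual of `B`, so `n = dim B` of them form a basis of it: at
the corresponding points `a¹, …, aⁿ` every vector of values, in particular every `±1` pattern, is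
attained by some `f ∈ B`. Conversely, any `k > n` evaluations are linearly dependent, giving
`c ≠ 0` with `∑ cᵢ f(aⁱ) = 0` on `B`, so `∑ cᵢ (f(aⁱ) + bᵢ)` is the same for all `f ∈ B`. But
this sum is `≥ 0` for an `f` realizing the sign pattern of `c` and `≤ 0` for one realizing the
opposite pattern, one of the two strictly.
-/

open Module Submodule

namespace Submodule

variable {K Ω ι : Type*} [Field K] (B : Submodule K (Ω → K))

def pointEval (ω : Ω) : Dual K B :=
  (LinearMap.proj ω).comp B.subtype

@[simp]
theorem pointEval_apply (ω : Ω) (f : B) : B.pointEval ω f = (f : Ω → K) ω :=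
  rfl

def evalAt (a : ι → Ω) : B →ₗ[K] ι → K :=
  LinearMap.pi fun i => B.pointEval (a i)

@[simp]
theorem evalAt_apply (a : ι → Ω) (f : B) : B.evalAt a f = fun i => (f : Ω → K) (a i) :=
  rfl

variable [FiniteDimensional K B]

theorem span_range_pointEval : span K (Set.range B.pointEval) = ⊤ := by
  set W := span K (Set.range B.pointEval)
  have hbot : W.dualCoannihilator = ⊥ := by
    refine eq_bot_iff.2 fun f hf => ?_
    rw [mem_dualCoannihilator] at hf
    exact (mem_bot K).2 <| Subtype.ext <| funext fun ω => hf _ (subset_span ⟨ω, rfl⟩)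
  have hdim := Subspace.finrank_add_finrank_dualCoannihilator_eq W
  rw [hbot, finrank_bot, add_zero, ← Subspace.dual_finrank_eq] at hdim
  exact eq_top_of_finrank_eq hdim

theorem exists_surjective_evalAt :
    ∃ a : Fin (finrank K B) → Ω, Function.Surjective (B.evalAt a) := by
  obtain ⟨κ, p, -, hspan, hli⟩ := exists_linearIndependent' K B.pointEval
  rw [span_range_pointEval] at hspan
  let β := Basis.mk hli hspan.ge
  have := Module.Finite.finite_basis β
  have := Fintype.ofFinite κ
  have hcard : Fintype.card κ = finrank K B := by
    rw [← finrank_eq_card_basis β, Subspace.dual_finrank_eq]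
  set e := Fintype.equivFinOfCardEq hcard
  refine ⟨p ∘ e.symm, ?_⟩
  rw [← LinearMap.injective_iff_surjective_of_finrank_eq_finrank (by simp)]
  refine (injective_iff_map_eq_zero _).2 fun f hf => (forall_dual_apply_eq_zero_iff K f).1 ?_
  have hβ : Dual.eval K B f = 0 := β.ext fun j => by
    simpa [β, e] using congrFun hf (e j)
  exact LinearMap.congr_fun hβ

theorem exists_ne_zero_sum_mul_eq_zero [Fintype ι] (a : ι → Ω)
    (h : finrank K B < Fintype.card ι) :
    ∃ c : ι → K, c ≠ 0 ∧ ∀ f ∈ B, ∑ i, c i * f (a i) = 0 := by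
  have hdep : ¬ LinearIndependent K (B.pointEval ∘ a) := fun hli =>
    h.not_ge (Subspace.dual_finrank_eq (K := K) (V := B) ▸ hli.fintype_card_le_finrank)
  obtain ⟨c, hc, j, hj⟩ := Fintype.not_linearIndependent_iff.1 hdep
  refine ⟨c, Function.ne_iff.2 ⟨j, hj⟩, fun f hf => ?_⟩
  simpa using LinearMap.congr_fun hc ⟨f, hf⟩

end Submodule

theorem sum_mul_lt_sum_mul_of_sign_patterns {ι : Type*} [Fintype ι] {c x y : ι → ℝ} (hc : c ≠ 0)
    (hx : ∀ i, 0 < x i ↔ 0 < c i) (hy : ∀ i, 0 < y i ↔ c i < 0) :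
    ∑ i, c i * y i < ∑ i, c i * x i := by
  have hterm : ∀ i, c i * y i ≤ c i * x i ∧ (c i ≠ 0 → c i * y i < c i * x i) := by
    intro i
    rcases lt_trichotomy (c i) 0 with hneg | hzero | hpos
    · have hyi := (hy i).2 hneg
      have hxi : x i ≤ 0 := not_lt.1 fun h => hneg.not_gt ((hx i).1 h)
      constructor <;> intros <;> nlinarith
    · simp [hzero]
    · have hxi := (hx i).2 hpos
      have hyi : y i ≤ 0 := not_lt.1 fun h => hpos.not_gt ((hy i).1 h)
      constructor <;> intros <;> nlinarith
  obtain ⟨j, hj⟩ := Function.ne_iff.1 hc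
  exact Finset.sum_lt_sum (fun i _ => (hterm i).1) ⟨j, Finset.mem_univ j, (hterm j).2 hj⟩

section

variable {Ω : Type*} (B : Submodule ℝ (Ω → ℝ)) [FiniteDimensional ℝ B]

theorem pShatters_finrank : PShatters (B : Set (Ω → ℝ)) (finrank ℝ B) := by
  obtain ⟨a, ha⟩ := B.exists_surjective_evalAt
  refine ⟨a, 0, fun ε => ?_⟩
  obtain ⟨f, hf⟩ := ha fun i => if ε i then 1 else -1
  refine ⟨f, f.2, fun i => ?_⟩
  have hfi : (f : Ω → ℝ) (a i) = if ε i then 1 else -1 := congrFun hf i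
  cases hε : ε i <;> simp [hfi, hε]

theorem not_pShatters_of_finrank_lt {k : ℕ} (hk : finrank ℝ B < k) :
    ¬ PShatters (B : Set (Ω → ℝ)) k := by
  rintro ⟨a, b, hsh⟩
  obtain ⟨c, hc0, hc⟩ := B.exists_ne_zero_sum_mul_eq_zero a (by simpa using hk)
  have hconst : ∀ f ∈ B, ∑ i, c i * (f (a i) + b i) = ∑ i, c i * b i := fun f hf => by
    simp only [mul_add, Finset.sum_add_distrib, hc f hf, zero_add]
  obtain ⟨f, hfB, hf⟩ := hsh fun i => decide (0 < c i)
  obtain ⟨g, hgB, hg⟩ := hsh fun i => decide (c i < 0)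
  have hlt := sum_mul_lt_sum_mul_of_sign_patterns hc0 (x := fun i => f (a i) + b i)
    (y := fun i => g (a i) + b i) (by simpa using hf) (by simpa using hg)
  rw [hconst f hfB, hconst g hgB] at hlt
  exact hlt.false

end

/-- If `B` is an `n`-dimensional linear space of real-valued functions on a set `Ω`,
then the pseudo-dimension of `B` equals `n`: `B` pseudo-shatters `n` points but no
larger number of points. -/
theorem pseudoDim_of_linear_space {Ω : Type*} (n : ℕ) (B : Subspace ℝ (Ω → ℝ))
    [FiniteDimensional ℝ B] (hB : Module.finrank ℝ B = n) :
    PShatters (B : Set (Ω → ℝ)) n ∧ ∀ k : ℕ, n < k → ¬ PShatters (B : Set (Ω → ℝ)) k := by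
  subst hB
  exact ⟨pShatters_finrank B, fun _ => not_pShatters_of_finrank_lt B⟩
end
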